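/- Let (X1, X2) be a doubly symmetric binary source with parameter p ∈ [0, 1/2]. The function g(p) = H(X1, X2 | X1 · X2) − H(X1, X2 | X1 ⊕ X2) = h((1-p)/(1+p), p/(1+p), p/(1+p)) · (1+p)/2 − 1 satisfies g(p) < 0 for all sufficiently small p > 0 and g(p) > 0 for all p sufficiently close to 1/2. -/

import Mathlib

open Real Finset

/-- Shannon entropy (base 2) of a finite pmf given as a real-valued function. -/
noncomputable def ent {α : Type*} [Fintype α] (p : α → ℝ) : ℝ :=
  ∑ x, -(p x * Real.logb 2 (p x))

/-- Conditional entropy H(A | B) computed from a joint pmf on α × β (conditioning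
on the second coordinate), via the chain rule H(A|B) = H(A,B) - H(B). -/
noncomputable def condEnt {α β : Type*} [Fintype α] [Fintype β] (r : α × β → ℝ) : ℝ :=
  ent r - ent (fun b => ∑ a, r (a, b))

/-- Joint pmf of a doubly symmetric binary source with parameter p. -/
noncomputable def dsbs (p : ℝ) : Bool × Bool → ℝ :=
  fun x => if x.1 = x.2 then (1 - p) / 2 else p / 2

/-- Binary entropy function (base 2). -/
noncomputable def H2 (p : ℝ) : ℝ :=
  -(p * Real.logb 2 p) - ((1 - p) * Real.logb 2 (1 - p))

/-- Entropy (base 2) of a ternary distribution (p1, p2, p3). -/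
noncomputable def h3 (a b c : ℝ) : ℝ :=
  -(a * Real.logb 2 a) - (b * Real.logb 2 b) - (c * Real.logb 2 c)

/-- Joint pmf of ((X1, X2), X1 ⊕ X2) for a DSBS(p). -/
noncomputable def sumJoint (p : ℝ) : (Bool × Bool) × Bool → ℝ :=
  fun x => if x.2 = xor x.1.1 x.1.2 then dsbs p x.1 else 0

/-- Joint pmf of ((X1, X2), X1 · X2) (logical AND) for a DSBS(p). -/
noncomputable def andJoint (p : ℝ) : (Bool × Bool) × Bool → ℝ :=
  fun x => if x.2 = (x.1.1 && x.1.2) then dsbs p x.1 else 0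

/-- Mutual information I(A; B) from a joint pmf on a product of finite types. -/
noncomputable def mi {α β : Type*} [Fintype α] [Fintype β] (j : α × β → ℝ) : ℝ :=
  ent (fun a => ∑ b, j (a, b)) + ent (fun b => ∑ a, j (a, b)) - ent j

/-- Joint pmf of (X1, X2, A) when (X1,X2) ~ DSBS(p) and A is generated from X1
through the conditional pmf t (so that X2 — X1 — A is a Markov chain). -/
noncomputable def Jm (p : ℝ) (t : Bool → Bool → ℝ) (x1 x2 a : Bool) : ℝ :=
  dsbs p (x1, x2) * t x1 a

/-- The gap g(p) = H(X1,X2 | X1·X2) − H(X1,X2 | X1⊕X2) for a DSBS(p). -/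
noncomputable def gGap (p : ℝ) : ℝ :=
  h3 ((1 - p) / (1 + p)) (p / (1 + p)) (p / (1 + p)) * ((1 + p) / 2) - 1

/-!
Every entropy here is a sum of terms `negMulLog x / log 2`, and
`negMulLog (x * y) = y * negMulLog x + x * negMulLog y` turns halving a cell, or conditioning
on an event, into an additive correction. Hence `X1 ⊕ X2` leaves exactly one bit, and
`X1 · X2` leaves the entropy of the three cells of `{X1 · X2 = 0}`, weighted by their total
mass `(1 + p) / 2`. The gap is `-1` at `p = 0` and `(3/4) log₂ 3 - 1 > 0` at `p = 1/2`, and it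
is continuous on `p > -1`, so it keeps these signs nearby.
-/

open Topology

lemma neg_mul_logb_two (x : ℝ) : -(x * logb 2 x) = negMulLog x / log 2 := by
  rw [logb, negMulLog]; ring

lemma negMulLog_div_two (x : ℝ) : negMulLog (x / 2) = (x * log 2 + negMulLog x) / 2 := by
  rw [div_eq_mul_inv, negMulLog_mul]
  simp only [negMulLog, log_inv]
  ring

lemma h3_eq (a b c : ℝ) : h3 a b c = (negMulLog a + negMulLog b + negMulLog c) / log 2 := by
  simp only [h3, sub_eq_add_neg, neg_mul_logb_two]; ring

lemma h3_div_mul {a b c : ℝ} (hs : a + b + c ≠ 0) :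
    h3 (a / (a + b + c)) (b / (a + b + c)) (c / (a + b + c)) * (a + b + c) =
      (negMulLog a + negMulLog b + negMulLog c - negMulLog (a + b + c)) / log 2 := by
  simp only [h3_eq, div_eq_mul_inv _ (a + b + c), negMulLog_mul]
  simp only [negMulLog, log_inv]
  field_simp
  ring

lemma gGap_eq {p : ℝ} (hp : 1 + p ≠ 0) :
    gGap p = (negMulLog ((1 - p) / 2) + 2 * negMulLog (p / 2) - negMulLog ((1 + p) / 2))
      / log 2 - 1 := by
  have hs : (1 - p) / 2 + p / 2 + p / 2 = (1 + p) / 2 := by ring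
  have hgroup := h3_div_mul (a := (1 - p) / 2) (b := p / 2) (c := p / 2)
    (by rw [hs]; simpa using hp)
  rw [hs] at hgroup
  rw [gGap, show (1 - p) / (1 + p) = (1 - p) / 2 / ((1 + p) / 2) by field_simp,
    show p / (1 + p) = p / 2 / ((1 + p) / 2) by field_simp, hgroup]
  ring

/-- Crypto lemma: X1 ⊕ X2 is independent of X1, so it leaves one full bit of uncertainty. -/
lemma condEnt_sumJoint (p : ℝ) : condEnt (sumJoint p) = 1 := by
  norm_num [condEnt, ent, sumJoint, dsbs, Fintype.sum_prod_type, neg_mul_logb_two,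
    negMulLog_div_two]
  field_simp
  ring

lemma condEnt_andJoint {p : ℝ} (hp : 1 + p ≠ 0) : condEnt (andJoint p) = gGap p + 1 := by
  rw [gGap_eq hp]
  norm_num [condEnt, ent, andJoint, dsbs, Fintype.sum_prod_type, neg_mul_logb_two]
  rw [show p / 2 + (p / 2 + (1 - p) / 2) = (1 + p) / 2 by ring]
  ring

lemma continuousAt_gGap {x : ℝ} (hx : 1 + x ≠ 0) : ContinuousAt gGap x := by
  unfold gGap
  simp only [h3_eq]
  fun_prop (disch := assumption)

lemma gGap_zero : gGap 0 = -1 := by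
  simp [gGap, h3]

lemma gGap_half : gGap (1 / 2) = 3 / 4 * logb 2 3 - 1 := by
  norm_num [gGap, h3]
  rw [one_div, logb_inv]
  ring

/-- Equivalent to `2 ^ 4 < 3 ^ 3`. -/
lemma four_thirds_lt_logb_two_three : 4 / 3 < logb 2 3 := by
  have h : log (2 ^ 4) < log (3 ^ 3) := log_lt_log (by norm_num) (by norm_num)
  rw [log_pow, log_pow] at h
  push_cast at h
  rw [logb, lt_div_iff₀ (log_pos one_lt_two)]
  linarith

/-- g(p) equals the entropy difference on [0,1/2]; it is negative for all sufficiently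
small p > 0 and positive for all p sufficiently close to 1/2. -/
theorem gap_sign_small_vs_half :
    (∀ p ∈ Set.Icc (0 : ℝ) (1/2),
        condEnt (andJoint p) - condEnt (sumJoint p) = gGap p) ∧
    (∃ δ > (0 : ℝ), ∀ p : ℝ, 0 < p → p < δ → gGap p < 0) ∧
    (∃ δ > (0 : ℝ), ∀ p : ℝ, 1/2 - δ < p → p ≤ 1/2 → 0 < gGap p) := by
  have gGap_half_pos : 0 < gGap (1 / 2) := by
    rw [gGap_half]
    linarith [four_thirds_lt_logb_two_three]
  refine ⟨fun p hp => ?_, ?_, ?_⟩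
  · rw [condEnt_andJoint (by linarith [hp.1]), condEnt_sumJoint]
    ring
  · have hneg : ∀ᶠ p in 𝓝 0, gGap p < 0 :=
      (continuousAt_gGap (by norm_num)).eventually_lt continuousAt_const
        (gGap_zero.trans_lt neg_one_lt_zero)
    obtain ⟨δ, hδ, h⟩ := Metric.eventually_nhds_iff.1 hneg
    exact ⟨δ, hδ, fun p hp hpδ => h (by rwa [dist_zero_right, norm_of_nonneg hp.le])⟩
  · have hpos : ∀ᶠ p in 𝓝 (1 / 2), 0 < gGap p :=
      continuousAt_const.eventually_lt (continuousAt_gGap (by norm_num)) gGap_half_pos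
    obtain ⟨δ, hδ, h⟩ := Metric.eventually_nhds_iff.1 hpos
    refine ⟨δ, hδ, fun p hpδ hp => h ?_⟩
    rw [dist_eq, abs_lt]
    constructor <;> linarith
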